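/- arXiv:1907.02151 — 6 statements merged into one kernel-verified Lean document; each statement's English description precedes it below -/
import Mathlib

section
/- Let Q ⊂ ℝ^d be a compact convex set with nonempty interior and let φ : ℝ^d → ℝ be twice continuously differentiable. Let L = sup { |φ(q₁) − φ(q₂)| / ‖q₁ − q₂‖ : q₁, q₂ ∈ Q, q₁ ≠ q₂ } be the Lipschitz constant of φ on Q, assumed finite and positive. Then there exists a point q* ∈ Q such that ‖∇φ(q*)‖ = L. (Lemma 1 of the paper.) -/
/-!
The maximum `M` of `‖∇φ‖` over the compact set `Q` is the Lipschitz constant `L`. By the mean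
value inequality on the convex set `Q`, every difference quotient is at most `M`, so `L ≤ M`.
Conversely, `φ` is `L`-Lipschitz on a neighbourhood of each interior point, so `‖∇φ‖ ≤ L` on
`interior Q`; as `Q` is convex with nonempty interior, `interior Q` is dense in `Q`, and
continuity of `∇φ` gives `‖∇φ‖ ≤ L` on all of `Q`, in particular `M ≤ L`.
-/

open Set

theorem norm_gradient_eq_norm_fderiv {𝕜 F : Type*} [RCLike 𝕜] [NormedAddCommGroup F]
    [InnerProductSpace 𝕜 F] [CompleteSpace F] (f : F → 𝕜) (x : F) :
    ‖gradient f x‖ = ‖fderiv 𝕜 f x‖ :=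
  (InnerProductSpace.toDual 𝕜 F).symm.norm_map _

section DifferenceQuotients

variable {E : Type*} [NormedAddCommGroup E]

def differenceQuotients (f : E → ℝ) (s : Set E) : Set ℝ :=
  {r | ∃ x ∈ s, ∃ y ∈ s, x ≠ y ∧ r = |f x - f y| / ‖x - y‖}

theorem lipschitzOnWith_of_mem_upperBounds_differenceQuotients {f : E → ℝ} {s : Set E}
    {L : NNReal} (h : (L : ℝ) ∈ upperBounds (differenceQuotients f s)) :
    LipschitzOnWith L f s := by
  refine LipschitzOnWith.of_dist_le_mul fun x hx y hy => ?_
  rcases eq_or_ne x y with rfl | hxy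
  · simp
  have hpos : 0 < ‖x - y‖ := norm_pos_iff.mpr (sub_ne_zero.mpr hxy)
  rw [Real.dist_eq, dist_eq_norm, ← div_le_iff₀ hpos]
  exact h ⟨x, hx, y, hy, hxy, rfl⟩

theorem mem_upperBounds_differenceQuotients_of_norm_fderiv_le [NormedSpace ℝ E] {f : E → ℝ}
    {s : Set E} {C : ℝ} (hs : Convex ℝ s) (hf : ∀ x ∈ s, DifferentiableAt ℝ f x)
    (bound : ∀ x ∈ s, ‖fderiv ℝ f x‖ ≤ C) : C ∈ upperBounds (differenceQuotients f s) := by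
  rintro r ⟨x, hx, y, hy, hxy, rfl⟩
  have hpos : 0 < ‖x - y‖ := norm_pos_iff.mpr (sub_ne_zero.mpr hxy)
  rw [div_le_iff₀ hpos, ← Real.norm_eq_abs]
  exact hs.norm_image_sub_le_of_norm_fderiv_le hf bound hy hx

end DifferenceQuotients

theorem Convex.norm_fderiv_le_of_lipschitzOnWith {E F : Type*} [NormedAddCommGroup E]
    [NormedSpace ℝ E] [NormedAddCommGroup F] [NormedSpace ℝ F] {f : E → F} {s : Set E}
    {C : NNReal} (hs : Convex ℝ s) (hs' : (interior s).Nonempty)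
    (hf : ContinuousOn (fderiv ℝ f) s) (hlip : LipschitzOnWith C f s) {x : E} (hx : x ∈ s) :
    ‖fderiv ℝ f x‖ ≤ C := by
  have hx' : x ∈ closure (interior s) := by
    rw [hs.closure_interior_eq_closure_of_nonempty_interior hs']
    exact subset_closure hx
  exact ContinuousWithinAt.closure_le hx' ((hf x hx).norm.mono interior_subset)
    continuousWithinAt_const fun y hy =>
      norm_fderiv_le_of_lipschitzOn ℝ (mem_interior_iff_mem_nhds.mp hy) hlip

/-- **Lemma 1.** If `Q ⊂ ℝ^d` is compact and convex with nonempty interior,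
`φ : ℝ^d → ℝ` is twice continuously differentiable, and `L > 0` is the Lipschitz
constant of `φ` on `Q` (the supremum of the difference quotients over distinct
pairs in `Q`), then there is a point `q* ∈ Q` with `‖∇φ(q*)‖ = L`. -/
theorem exists_gradient_norm_eq_lipschitz_const
    {d : ℕ} (Q : Set (EuclideanSpace ℝ (Fin d)))
    (hQcompact : IsCompact Q) (hQconvex : Convex ℝ Q)
    (hQint : (interior Q).Nonempty)
    (φ : EuclideanSpace ℝ (Fin d) → ℝ) (hφ : ContDiff ℝ 2 φ)
    (L : ℝ) (hLpos : 0 < L)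
    (hL : IsLUB {r : ℝ | ∃ q₁ ∈ Q, ∃ q₂ ∈ Q, q₁ ≠ q₂ ∧
      r = |φ q₁ - φ q₂| / ‖q₁ - q₂‖} L) :
    ∃ qstar ∈ Q, ‖gradient φ qstar‖ = L := by
  have hφ1 : ContDiff ℝ 1 φ := hφ.of_le (by norm_num)
  have hcont : Continuous (fderiv ℝ φ) := hφ1.continuous_fderiv one_ne_zero
  obtain ⟨qstar, hqstar, hmax⟩ := hQcompact.exists_isMaxOn (hQint.mono interior_subset)
    hcont.norm.continuousOn
  refine ⟨qstar, hqstar, ?_⟩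
  rw [norm_gradient_eq_norm_fderiv]
  apply le_antisymm
  · have hlip : LipschitzOnWith ⟨L, hLpos.le⟩ φ Q :=
      lipschitzOnWith_of_mem_upperBounds_differenceQuotients hL.1
    exact hQconvex.norm_fderiv_le_of_lipschitzOnWith hQint hcont.continuousOn hlip hqstar
  · exact hL.2 <| mem_upperBounds_differenceQuotients_of_norm_fderiv_le hQconvex
      (fun x _ => hφ1.differentiable one_ne_zero x) fun x hx => hmax hx
end

section
/- Let v ∈ ℝ^d be a unit vector and χ ∈ (0,1). Suppose q₊, q₋ ∈ ℝ^d satisfy ⟨q₊, v⟩ ≥ 0, ⟨q₋, v⟩ ≤ 0, ‖q₊ − ⟨q₊, v⟩ v‖ ≤ χ ⟨q₊, v⟩, and ‖q₋ − ⟨q₋, v⟩ v‖ ≤ χ |⟨q₋, v⟩|. Then ‖q₊ − q₋‖ ≥ (‖q₊‖ + ‖q₋‖)(1 − χ)(1 − χ²/2). (Geometric cone-separation estimate used in the proof of Theorem 1.) -/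
open scoped RealInnerProductSpace

lemma norm_le_of_cone {d : ℕ} (v : EuclideanSpace ℝ (Fin d)) (hv : ‖v‖ = 1)
    (χ : ℝ) (hχ : 0 < χ) (q : EuclideanSpace ℝ (Fin d))
    (h : ‖q - ⟪q, v⟫ • v‖ ≤ χ * |⟪q, v⟫|) :
    ‖q‖ ≤ |⟪q, v⟫| * (1 + χ ^ 2 / 2) := by
  set t : ℝ := ⟪q, v⟫ with ht
  have horth : ⟪q - t • v, t • v⟫ = 0 := by
    rw [inner_sub_left, real_inner_smul_right, real_inner_smul_right,
      real_inner_smul_left, real_inner_self_eq_norm_sq, hv, ← ht]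
    ring
  have hpyth : ‖q‖ ^ 2 = ‖q - t • v‖ ^ 2 + ‖t • v‖ ^ 2 := by
    rw [pow_two, pow_two, pow_two]
    simpa using norm_add_sq_eq_norm_sq_add_norm_sq_real horth
  have htv : ‖t • v‖ = |t| := by rw [norm_smul, hv, Real.norm_eq_abs, mul_one]
  have h1 : ‖q‖ ^ 2 ≤ (χ * |t|) ^ 2 + |t| ^ 2 := by
    rw [hpyth, htv]
    have := sq_le_sq' (by linarith [norm_nonneg (q - t • v)] : -(χ * |t|) ≤ ‖q - t • v‖) h
    linarith
  nlinarith [norm_nonneg q, abs_nonneg t, sq_nonneg χ, sq_nonneg (χ * |t|),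
    mul_nonneg (abs_nonneg t) (sq_nonneg χ)]

/-- Geometric cone-separation estimate used in the proof of Theorem 1: if `q₊`
lies in the cone of half-aperture `arctan χ` around the unit vector `v` and `q₋`
lies in the opposite cone around `−v`, then
`‖q₊ − q₋‖ ≥ (‖q₊‖ + ‖q₋‖)(1 − χ)(1 − χ²/2)`. -/
theorem cone_separation_estimate
    {d : ℕ} (v : EuclideanSpace ℝ (Fin d)) (hv : ‖v‖ = 1)
    (χ : ℝ) (hχ : χ ∈ Set.Ioo (0 : ℝ) 1)
    (qp qm : EuclideanSpace ℝ (Fin d))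
    (hqp_pos : 0 ≤ ⟪qp, v⟫) (hqm_neg : ⟪qm, v⟫ ≤ 0)
    (hqp_cone : ‖qp - ⟪qp, v⟫ • v‖ ≤ χ * ⟪qp, v⟫)
    (hqm_cone : ‖qm - ⟪qm, v⟫ • v‖ ≤ χ * |⟪qm, v⟫|) :
    (‖qp‖ + ‖qm‖) * (1 - χ) * (1 - χ ^ 2 / 2) ≤ ‖qp - qm‖ := by
  obtain ⟨hχ0, hχ1⟩ := hχ
  have hap : |⟪qp, v⟫| = ⟪qp, v⟫ := abs_of_nonneg hqp_pos
  have hbp : ‖qp‖ ≤ |⟪qp, v⟫| * (1 + χ ^ 2 / 2) :=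
    norm_le_of_cone v hv χ hχ0 qp (by rw [hap]; exact hqp_cone)
  have hbm : ‖qm‖ ≤ |⟪qm, v⟫| * (1 + χ ^ 2 / 2) :=
    norm_le_of_cone v hv χ hχ0 qm hqm_cone
  have ham : |⟪qm, v⟫| = -⟪qm, v⟫ := abs_of_nonpos hqm_neg
  have hinner : ⟪qp - qm, v⟫ ≤ ‖qp - qm‖ := by
    have := real_inner_le_norm (qp - qm) v
    rwa [hv, mul_one] at this
  have hsub : ⟪qp - qm, v⟫ = ⟪qp, v⟫ - ⟪qm, v⟫ := inner_sub_left _ _ _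
  rw [hap] at hbp; rw [ham] at hbm
  set a := ⟪qp, v⟫
  set b := ⟪qm, v⟫
  have hc : 0 ≤ a - b := by linarith
  have h1 : ‖qp‖ + ‖qm‖ ≤ (a - b) * (1 + χ ^ 2 / 2) := by nlinarith
  have hχsq : χ ^ 2 < 1 := by nlinarith
  have hfac : 0 ≤ (1 - χ) * (1 - χ ^ 2 / 2) := by nlinarith
  have h2 : (‖qp‖ + ‖qm‖) * ((1 - χ) * (1 - χ ^ 2 / 2)) ≤
      (a - b) * (1 + χ ^ 2 / 2) * ((1 - χ) * (1 - χ ^ 2 / 2)) :=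
    mul_le_mul_of_nonneg_right h1 hfac
  have h3 : (a - b) * (1 + χ ^ 2 / 2) * ((1 - χ) * (1 - χ ^ 2 / 2)) ≤ a - b := by
    nlinarith [sq_nonneg χ, sq_nonneg (χ ^ 2), mul_nonneg hc (sq_nonneg (χ ^ 2))]
  have h4 : a - b ≤ ‖qp - qm‖ := by rw [hsub] at hinner; linarith
  nlinarith [h2, h3, h4]
end

section
/- Let φ : ℝ^d → ℝ be twice continuously differentiable and globally Lipschitz with constant L* > 0 (so ‖∇φ(q)‖ ≤ L* for all q), and let q* ∈ ℝ^d satisfy ‖∇φ(q*)‖ = L*. Set v = ∇φ(q*)/L*. Then there exist constants C₀ > 0 and δ₀ > 0 such that for every δ ∈ (0, δ₀) and every pair q₊, q₋ ∈ ℝ^d with 0 < ‖q₊‖ ≤ δ, 0 < ‖q₋‖ ≤ δ, ‖q₊ − ⟨q₊, v⟩v‖ ≤ 2δ ⟨q₊, v⟩, and ‖(−q₋) − ⟨−q₋, v⟩v‖ ≤ 2δ ⟨−q₋, v⟩, one has |φ(q* + q₊) − φ(q* + q₋)| / ‖q₊ − q₋‖ ≥ (1 − δ) L* − C₀ δ.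 (Deterministic core estimate \u2014 inequality (19) \u2014 in the proof of Theorem 1.) -/
open scoped RealInnerProductSpace NNReal
open InnerProductSpace Metric

lemma cone_lower_aux {d : ℕ} (v q : EuclideanSpace ℝ (Fin d)) (hvn : ‖v‖ = 1) {δ : ℝ}
    (hδ0 : 0 < δ) (hδ4 : δ ≤ 1/4)
    (hcone : ‖q - ⟪q, v⟫ • v‖ ≤ 2 * δ * ⟪q, v⟫) : (1 - δ) * ‖q‖ ≤ ⟪q, v⟫ := by
  set a := ⟪q, v⟫ with ha
  have ha0 : 0 ≤ a := by nlinarith [norm_nonneg (q - a • v)]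
  have hpyth : ‖q - a • v‖ ^ 2 = ‖q‖ ^ 2 - a ^ 2 := by
    rw [norm_sub_sq_real, real_inner_smul_right, norm_smul]
    simp [hvn, ← ha]
    ring
  have hsq : ‖q - a • v‖ ^ 2 ≤ (2 * δ * a) ^ 2 := by
    apply sq_le_sq' _ hcone
    nlinarith [norm_nonneg (q - a • v)]
  rw [hpyth] at hsq
  have hq2 : ‖q‖ ^ 2 ≤ (1 + 4 * δ ^ 2) * a ^ 2 := by nlinarith
  have hpoly : 0 ≤ δ * (2 - 5 * δ + 8 * δ ^ 2 - 4 * δ ^ 3) := by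
    have h1 : 0 ≤ δ * (2 - 5 * δ) := mul_nonneg hδ0.le (by linarith)
    have h2' : 0 ≤ δ * δ ^ 2 * (4 * (2 - δ)) :=
      mul_nonneg (mul_nonneg hδ0.le (sq_nonneg δ)) (by linarith)
    nlinarith [h1, h2']
  have h2 : ((1 - δ) * ‖q‖) ^ 2 ≤ a ^ 2 := by
    nlinarith [mul_le_mul_of_nonneg_left hq2 (sq_nonneg (1 - δ)),
      mul_nonneg (sq_nonneg a) hpoly]
  have hb0 : 0 ≤ (1 - δ) * ‖q‖ := by
    have : (0:ℝ) ≤ 1 - δ := by linarith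
    exact mul_nonneg this (norm_nonneg q)
  nlinarith [h2, ha0, hb0]

lemma taylor_bound_aux {d : ℕ} (φ : EuclideanSpace ℝ (Fin d) → ℝ) (hφ : ContDiff ℝ 2 φ)
    (qstar : EuclideanSpace ℝ (Fin d)) (K : ℝ≥0) (r : ℝ)
    (hlip : LipschitzOnWith K (gradient φ) (closedBall qstar r))
    (q : EuclideanSpace ℝ (Fin d)) (hq : ‖q‖ ≤ r) :
    |φ (qstar + q) - φ qstar - ⟪gradient φ qstar, q⟫| ≤ K * ‖q‖ ^ 2 := by
  set c := gradient φ qstar with hc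
  set f : EuclideanSpace ℝ (Fin d) → ℝ :=
    fun z => φ z - (toDual ℝ (EuclideanSpace ℝ (Fin d)) c) z with hf
  have hdiff : Differentiable ℝ φ := hφ.differentiable (by norm_num)
  have key : ∀ x ∈ closedBall qstar ‖q‖, ∀ y ∈ closedBall qstar ‖q‖,
      ‖f y - f x‖ ≤ (K * ‖q‖) * ‖y - x‖ := by
    intro x hx y hy
    apply Convex.norm_image_sub_le_of_norm_hasFDerivWithin_le
      (f' := fun z => fderiv ℝ φ z - toDual ℝ (EuclideanSpace ℝ (Fin d)) c)
      (fun z hz => (((hdiff z).hasFDerivAt).sub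
        ((toDual ℝ (EuclideanSpace ℝ (Fin d)) c).hasFDerivAt)).hasFDerivWithinAt)
      ?_ (convex_closedBall _ _) hx hy
    intro z hz
    have hz' : z ∈ closedBall qstar r := closedBall_subset_closedBall hq hz
    have h1 : fderiv ℝ φ z - toDual ℝ (EuclideanSpace ℝ (Fin d)) c
        = toDual ℝ (EuclideanSpace ℝ (Fin d)) (gradient φ z - c) := by
      rw [map_sub]
      congr 1
      exact ((toDual ℝ _).apply_symm_apply (fderiv ℝ φ z)).symm
    show ‖fderiv ℝ φ z - toDual ℝ (EuclideanSpace ℝ (Fin d)) c‖ ≤ K * ‖q‖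
    rw [h1, LinearIsometryEquiv.norm_map]
    have h2 := hlip.norm_sub_le hz' (mem_closedBall_self (le_trans (norm_nonneg q) hq))
    calc ‖gradient φ z - c‖ ≤ K * ‖z - qstar‖ := h2
    _ ≤ K * ‖q‖ := by
        apply mul_le_mul_of_nonneg_left _ K.coe_nonneg
        simpa [mem_closedBall, dist_eq_norm] using hz
  have h3 := key qstar (mem_closedBall_self (norm_nonneg q)) (qstar + q)
    (by simp [mem_closedBall, dist_eq_norm])
  have h4 : f (qstar + q) - f qstar = φ (qstar + q) - φ qstar - ⟪c, q⟫ := by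
    simp only [hf, toDual_apply_apply, inner_add_right]
    ring
  rw [h4] at h3
  calc |φ (qstar + q) - φ qstar - ⟪c, q⟫| ≤ K * ‖q‖ * ‖qstar + q - qstar‖ := h3
  _ = K * ‖q‖ ^ 2 := by simp [sq]; ring

/-- Deterministic core estimate (inequality (19)) in the proof of Theorem 1.
Let `φ` be `C²` and globally Lipschitz with constant `L* > 0` (so `‖∇φ‖ ≤ L*`
everywhere), with the bound attained at `q*`, and let `v = ∇φ(q*)/L*`. Then
there are `C₀ > 0` and `δ₀ > 0` such that for all `δ ∈ (0, δ₀)` and all points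
`q₊, q₋` of norm at most `δ` lying (respectively) in the cones of half-aperture
`arctan(2δ)` around `v` and `−v`, the difference quotient of `φ` at
`q* + q₊, q* + q₋` is at least `(1 − δ)L* − C₀ δ`. -/
theorem lipschitz_difference_quotient_lower_bound
    {d : ℕ} (φ : EuclideanSpace ℝ (Fin d) → ℝ) (hφ : ContDiff ℝ 2 φ)
    (Lstar : ℝ) (hLpos : 0 < Lstar)
    (hgrad : ∀ q, ‖gradient φ q‖ ≤ Lstar)
    (qstar : EuclideanSpace ℝ (Fin d)) (hqstar : ‖gradient φ qstar‖ = Lstar)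
    (v : EuclideanSpace ℝ (Fin d)) (hv : v = Lstar⁻¹ • gradient φ qstar) :
    ∃ C₀ > (0 : ℝ), ∃ δ₀ > (0 : ℝ), ∀ δ ∈ Set.Ioo (0 : ℝ) δ₀,
      ∀ qp qm : EuclideanSpace ℝ (Fin d),
        0 < ‖qp‖ → ‖qp‖ ≤ δ → 0 < ‖qm‖ → ‖qm‖ ≤ δ →
        ‖qp - ⟪qp, v⟫ • v‖ ≤ 2 * δ * ⟪qp, v⟫ →
        ‖(-qm) - ⟪-qm, v⟫ • v‖ ≤ 2 * δ * ⟪-qm, v⟫ →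
        (1 - δ) * Lstar - C₀ * δ ≤
          |φ (qstar + qp) - φ (qstar + qm)| / ‖qp - qm‖ := by
  have hg1 : ContDiff ℝ 1 (gradient φ) := by
    have h1 : ContDiff ℝ 1 (fderiv ℝ φ) := hφ.fderiv_right (by norm_num)
    have h2 : gradient φ = fun x => (toDual ℝ _).symm (fderiv ℝ φ x) := rfl
    rw [h2]
    exact (toDual ℝ _).symm.toContinuousLinearEquiv.contDiff.comp h1
  obtain ⟨K, t, ht, hlipt⟩ := (hg1.contDiffAt (x := qstar)).exists_lipschitzOnWith
  obtain ⟨r, hr0, hball⟩ := Metric.mem_nhds_iff.mp ht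
  have hlip : LipschitzOnWith K (gradient φ) (closedBall qstar (r/2)) :=
    hlipt.mono (fun z hz => hball (closedBall_subset_ball (by linarith) hz))
  refine ⟨(K:ℝ) + 1, by positivity, min (1/4) (r/2), by positivity, ?_⟩
  intro δ hδ qp qm hp0 hpδ hm0 hmδ hconep hconem
  obtain ⟨hδ0, hδlt⟩ := hδ
  have hδ4 : δ ≤ 1/4 := le_of_lt (lt_of_lt_of_le hδlt (min_le_left _ _))
  have hδr : δ ≤ r/2 := le_of_lt (lt_of_lt_of_le hδlt (min_le_right _ _))
  have hvn : ‖v‖ = 1 := by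
    rw [hv, norm_smul, hqstar, norm_inv, Real.norm_eq_abs, abs_of_pos hLpos]
    field_simp
  set c := gradient φ qstar with hc
  have hcv : c = Lstar • v := by
    rw [hv, smul_smul, mul_inv_cancel₀ hLpos.ne', one_smul]
  set ap := ⟪qp, v⟫ with hap
  set am := ⟪-qm, v⟫ with ham
  have hap1 : (1 - δ) * ‖qp‖ ≤ ap := cone_lower_aux v qp hvn hδ0 hδ4 hconep
  have ham1 : (1 - δ) * ‖qm‖ ≤ am := by
    have := cone_lower_aux v (-qm) hvn hδ0 hδ4 hconem
    rwa [norm_neg] at this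
  have h1δ : (0:ℝ) < 1 - δ := by linarith
  have hap0 : 0 < ap := lt_of_lt_of_le (by positivity) hap1
  have ham0 : 0 < am := lt_of_lt_of_le (by positivity) ham1
  have htp := taylor_bound_aux φ hφ qstar K (r/2) hlip qp (le_trans hpδ hδr)
  have htm := taylor_bound_aux φ hφ qstar K (r/2) hlip qm (le_trans hmδ hδr)
  have hip : ⟪c, qp⟫ = Lstar * ap := by
    rw [hcv, real_inner_smul_left, real_inner_comm]
  have hqmv : ⟪qm, v⟫ = -am := by rw [ham, inner_neg_left]; ring
  have him : ⟪c, qm⟫ = -(Lstar * am) := by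
    rw [hcv, real_inner_smul_left, real_inner_comm, hqmv]; ring
  have hden1 : ap + am ≤ ‖qp - qm‖ := by
    have hinner_d : ⟪qp - qm, v⟫ = ap + am := by
      rw [inner_sub_left, hqmv, ← hap]; ring
    calc ap + am = ⟪qp - qm, v⟫ := hinner_d.symm
    _ ≤ ‖qp - qm‖ * ‖v‖ := real_inner_le_norm _ _
    _ = ‖qp - qm‖ := by rw [hvn, mul_one]
  have hdpos : 0 < ‖qp - qm‖ := lt_of_lt_of_le (by positivity) hden1
  have hS : ‖qp - qm‖ ≤ ‖qp‖ + ‖qm‖ := norm_sub_le _ _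
  have hKp : (K:ℝ) * ‖qp‖^2 ≤ (K:ℝ) * δ * ‖qp‖ := by
    have h := mul_nonneg (mul_nonneg K.coe_nonneg
      (by linarith : (0:ℝ) ≤ δ - ‖qp‖)) (norm_nonneg qp)
    have h2 : (K:ℝ) * (δ - ‖qp‖) * ‖qp‖ = (K:ℝ)*δ*‖qp‖ - (K:ℝ)*‖qp‖^2 := by ring
    linarith
  have hKm : (K:ℝ) * ‖qm‖^2 ≤ (K:ℝ) * δ * ‖qm‖ := by
    have h := mul_nonneg (mul_nonneg K.coe_nonneg
      (by linarith : (0:ℝ) ≤ δ - ‖qm‖)) (norm_nonneg qm)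
    have h2 : (K:ℝ) * (δ - ‖qm‖) * ‖qm‖ = (K:ℝ)*δ*‖qm‖ - (K:ℝ)*‖qm‖^2 := by ring
    linarith
  have habsp := abs_le.mp htp
  have habsm := abs_le.mp htm
  have hnum : Lstar * (ap + am) - (K:ℝ)*δ*(‖qp‖+‖qm‖)
      ≤ φ (qstar + qp) - φ (qstar + qm) := by
    have e1 := habsp.1
    have e2 := habsm.2
    rw [hip] at e1
    rw [him] at e2
    linarith
  rcases le_or_gt ((1-δ)*Lstar - ((K:ℝ)+1)*δ) 0 with hB | hB
  · exact le_trans hB (div_nonneg (abs_nonneg _) (norm_nonneg _))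
  · rw [le_div_iff₀ hdpos]
    have hA : (1-δ)*Lstar*(‖qp‖+‖qm‖) ≤ Lstar*(ap+am) := by
      have h3 := mul_le_mul_of_nonneg_left (add_le_add hap1 ham1) hLpos.le
      have h4 : Lstar * ((1-δ)*‖qp‖ + (1-δ)*‖qm‖) = (1-δ)*Lstar*(‖qp‖+‖qm‖) := by ring
      linarith
    calc ((1-δ)*Lstar - ((K:ℝ)+1)*δ) * ‖qp - qm‖
        ≤ ((1-δ)*Lstar - ((K:ℝ)+1)*δ) * (‖qp‖+‖qm‖) :=
          mul_le_mul_of_nonneg_left hS hB.le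
    _ ≤ φ (qstar + qp) - φ (qstar + qm) := by
        have hδS : 0 ≤ δ * (‖qp‖+‖qm‖) := by positivity
        have hexp : ((1-δ)*Lstar - ((K:ℝ)+1)*δ) * (‖qp‖+‖qm‖)
            = (1-δ)*Lstar*(‖qp‖+‖qm‖) - (K:ℝ)*δ*(‖qp‖+‖qm‖) - δ*(‖qp‖+‖qm‖) := by ring
        linarith [hnum, hA, hδS]
    _ ≤ |φ (qstar + qp) - φ (qstar + qm)| := le_abs_self _
end

section
/- Let X ⊂ ℝ^d (d ≥ 1) be a compact set with nonempty interior, and let φ : ℝ^d → ℝ be twice continuously differentiable, globally Lipschitz with constant L* > 0 (so ‖∇φ(q)‖ ≤ L* for all q), and suppose the Lipschitz constant is attained at an interior point q* of X, i.e. ‖∇φ(q*)‖ = L*. Then there exist constants C₀ > 0, κ > 0 and δ₀ > 0 such that for all δ ∈ (0, δ₀) and all n ∈ ℕ, if q₁, …, qₙ are independent random points, each uniformly distributed on X (with respect to Lebesgue measure), then with probability at least 1 − 3 exp(−n κ δ^{2d−1}) there exist indices i ≠ j with |φ(qᵢ) − φ(qⱼ)| / ‖qᵢ − qⱼ‖ ≥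 (1 − δ) L* − C₀ δ. (Theorem 1.) -/
/-!
Choose an orthonormal basis `b` with `b k = ∇φ(q*) / L*` and place two needles on either side
of `q*`: boxes centred at `q* ± 3δ b k`, of half-length `δ` along `b k` and half-width `δ²`
across it, each of volume `2^d δ^(2d-1)`. A segment from one needle to the other
has length about `6δ` and leaves the direction `b k` only by `O(δ²)`, and `∇φ` is Lipschitz near
`q*`, so the mean value theorem bounds its difference quotient below by `L* - O(δ)`. The `n`
samples all miss a fixed box of probability `p` with probability `(1 - p)^n ≤ exp(-n p)`.
-/

open MeasureTheory ProbabilityTheory Finset Metric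

open scoped RealInnerProductSpace ENNReal NNReal Topology

section Sampling

variable {α : Type*} [MeasurableSpace α] (ν : Measure α) [IsProbabilityMeasure ν]

theorem measure_pi_forall_notMem_le_exp {S : Set α} (hS : MeasurableSet S) {p : ℝ} (hp0 : 0 ≤ p)
    (hp : ENNReal.ofReal p ≤ ν S) (n : ℕ) :
    Measure.pi (fun _ : Fin n => ν) {q | ∀ i, q i ∉ S} ≤ ENNReal.ofReal (Real.exp (-(n * p))) := by
  have hSc : ν Sᶜ ≤ ENNReal.ofReal (Real.exp (-p)) :=
    calc ν Sᶜ = 1 - ν S := prob_compl_eq_one_sub hS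
      _ ≤ 1 - ENNReal.ofReal p := tsub_le_tsub_left hp 1
      _ = ENNReal.ofReal (1 - p) := by rw [ENNReal.ofReal_sub 1 hp0, ENNReal.ofReal_one]
      _ ≤ ENNReal.ofReal (Real.exp (-p)) := by
          gcongr
          linarith [Real.add_one_le_exp (-p)]
  have hpi : {q : Fin n → α | ∀ i, q i ∉ S} = Set.univ.pi fun _ => Sᶜ := by ext; simp
  calc Measure.pi (fun _ : Fin n => ν) {q | ∀ i, q i ∉ S} = ν Sᶜ ^ n := by
        rw [hpi, Measure.pi_pi, prod_const, card_univ, Fintype.card_fin]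
    _ ≤ ENNReal.ofReal (Real.exp (-p)) ^ n := by gcongr
    _ = ENNReal.ofReal (Real.exp (-(n * p))) := by
        rw [← ENNReal.ofReal_pow (Real.exp_nonneg _), ← Real.exp_nat_mul, mul_neg]

theorem ofReal_one_sub_le_measure_pi_exists_mem_and_exists_mem {A B : Set α}
    (hA : MeasurableSet A) (hB : MeasurableSet B) {p : ℝ} (hp0 : 0 ≤ p)
    (hpA : ENNReal.ofReal p ≤ ν A) (hpB : ENNReal.ofReal p ≤ ν B) (n : ℕ) :
    ENNReal.ofReal (1 - 2 * Real.exp (-(n * p))) ≤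
      Measure.pi (fun _ : Fin n => ν) {q | (∃ i, q i ∈ A) ∧ ∃ j, q j ∈ B} := by
  set μ := Measure.pi fun _ : Fin n => ν
  set T := {q : Fin n → α | (∃ i, q i ∈ A) ∧ ∃ j, q j ∈ B}
  have hTc : Tᶜ ⊆ {q | ∀ i, q i ∉ A} ∪ {q | ∀ i, q i ∉ B} := by
    intro q hq
    by_contra h
    simp only [Set.mem_union, Set.mem_ofPred_eq, not_or, not_forall, not_not] at h
    exact hq ⟨h.1, h.2⟩
  have hμTc : μ Tᶜ ≤ ENNReal.ofReal (2 * Real.exp (-(n * p))) :=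
    calc μ Tᶜ ≤ μ {q | ∀ i, q i ∉ A} + μ {q | ∀ i, q i ∉ B} :=
          (measure_mono hTc).trans (measure_union_le _ _)
      _ ≤ ENNReal.ofReal (Real.exp (-(n * p))) + ENNReal.ofReal (Real.exp (-(n * p))) :=
          add_le_add (measure_pi_forall_notMem_le_exp ν hA hp0 hpA n)
            (measure_pi_forall_notMem_le_exp ν hB hp0 hpB n)
      _ = ENNReal.ofReal (2 * Real.exp (-(n * p))) := by
          rw [← ENNReal.ofReal_add (Real.exp_nonneg _) (Real.exp_nonneg _), two_mul]
  calc ENNReal.ofReal (1 - 2 * Real.exp (-(n * p)))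
      = 1 - ENNReal.ofReal (2 * Real.exp (-(n * p))) := by
        rw [ENNReal.ofReal_sub 1 (by positivity), ENNReal.ofReal_one]
    _ ≤ 1 - μ Tᶜ := tsub_le_tsub_left hμTc 1
    _ ≤ μ T := tsub_le_iff_right.mpr (by simpa using measure_univ_le_add_compl T (μ := μ))

end Sampling

section Analysis

variable {E : Type*} [NormedAddCommGroup E] [InnerProductSpace ℝ E]

theorem Convex.inner_sub_sub_mul_norm_sub_le_sub {f : E → ℝ} {f' : E → E →L[ℝ] ℝ} {s : Set E}
    {g : E} {η : ℝ} (hs : Convex ℝ s) (hf : ∀ x ∈ s, HasFDerivAt f (f' x) x)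
    (hη : ∀ x ∈ s, ‖f' x - innerSL ℝ g‖ ≤ η) {x y : E} (hx : x ∈ s) (hy : y ∈ s) :
    ⟪g, y - x⟫ - η * ‖y - x‖ ≤ f y - f x := by
  have h := hs.norm_image_sub_le_of_norm_hasFDerivWithin_le (f := fun z => f z - ⟪g, z⟫)
    (fun z hz => ((hf z hz).sub (innerSL ℝ g).hasFDerivAt).hasFDerivWithinAt) hη hx hy
  rw [Real.norm_eq_abs, abs_le] at h
  rw [inner_sub_right]
  linarith [h.1]

theorem ContDiffAt.exists_eventually_norm_fderiv_sub_le {F : Type*} [NormedAddCommGroup F]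
    [NormedSpace ℝ F] {f : E → F} {q : E} (hf : ContDiffAt ℝ 2 f q) :
    ∃ K : ℝ≥0, ∀ᶠ x in 𝓝 q, ‖fderiv ℝ f x - fderiv ℝ f q‖ ≤ K * ‖x - q‖ := by
  obtain ⟨K, t, ht, hK⟩ := (hf.fderiv_right (m := 1) le_rfl).exists_lipschitzOnWith
  refine ⟨K, ?_⟩
  filter_upwards [ht] with x hx
  simpa [dist_eq_norm] using hK.dist_le_mul x hx q (mem_of_mem_nhds ht)

theorem exists_orthonormalBasis_norm_smul_apply_eq {ι : Type*} [Fintype ι] [FiniteDimensional ℝ E]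
    (hcard : Module.finrank ℝ E = Fintype.card ι) (k : ι) {v : E} (hv : v ≠ 0) :
    ∃ b : OrthonormalBasis ι ℝ E, ‖v‖ • b k = v := by
  have horth : Orthonormal ℝ (({k} : Set ι).domRestrict fun _ => ‖v‖⁻¹ • v) :=
    ⟨fun _ => norm_smul_inv_norm hv, fun i j hij => absurd (Subtype.ext (i.2.trans j.2.symm)) hij⟩
  obtain ⟨b, hb⟩ := horth.exists_orthonormalBasis_extension_of_card_eq hcard
  exact ⟨b, by rw [hb k rfl, smul_inv_smul₀ (norm_ne_zero_iff.mpr hv)]⟩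

end Analysis

namespace OrthonormalBasis

variable {ι E : Type*} [Fintype ι] [NormedAddCommGroup E] [InnerProductSpace ℝ E]
  (b : OrthonormalBasis ι ℝ E)

theorem norm_le_sum_abs_repr (v : E) : ‖v‖ ≤ ∑ i, |b.repr v i| :=
  calc ‖v‖ = ‖∑ i, b.repr v i • b i‖ := by rw [b.sum_repr]
    _ ≤ ∑ i, ‖b.repr v i • b i‖ := norm_sum_le _ _
    _ = ∑ i, |b.repr v i| := by simp [norm_smul]

theorem norm_sub_repr_smul_le_sum_erase [DecidableEq ι] (k : ι) (v : E) :
    ‖v - b.repr v k • b k‖ ≤ ∑ i ∈ univ.erase k, |b.repr v i| := by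
  have hv : v - b.repr v k • b k = ∑ i ∈ univ.erase k, b.repr v i • b i := by
    rw [sub_eq_iff_eq_add, add_comm]
    exact ((add_sum_erase univ (fun i => b.repr v i • b i) (mem_univ k)).trans (b.sum_repr v)).symm
  calc ‖v - b.repr v k • b k‖ ≤ ∑ i ∈ univ.erase k, ‖b.repr v i • b i‖ := hv ▸ norm_sum_le _ _
    _ = ∑ i ∈ univ.erase k, |b.repr v i| := by simp [norm_smul]

def coordBox (c : E) (r : ι → ℝ) : Set E := {x | ∀ i, |b.repr (x - c) i| ≤ r i}

theorem isClosed_coordBox (c : E) (r : ι → ℝ) : IsClosed (b.coordBox c r) := by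
  simp only [coordBox, Set.ofPred_forall]
  exact isClosed_iInter fun i => isClosed_le (by fun_prop) continuous_const

theorem norm_sub_le_sum_of_mem_coordBox {c x : E} {r : ι → ℝ} (hx : x ∈ b.coordBox c r) :
    ‖x - c‖ ≤ ∑ i, r i :=
  (b.norm_le_sum_abs_repr _).trans (sum_le_sum fun i _ => hx i)

theorem sub_mem_coordBox {c c' x x' : E} {r r' : ι → ℝ} (hx : x ∈ b.coordBox c r)
    (hx' : x' ∈ b.coordBox c' r') : x - x' ∈ b.coordBox (c - c') (r + r') := by
  intro i
  rw [show x - x' - (c - c') = (x - c) - (x' - c') by abel, map_sub]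
  exact (abs_sub _ _).trans (add_le_add (hx i) (hx' i))

theorem volume_coordBox [MeasurableSpace E] [BorelSpace E] [FiniteDimensional ℝ E] (c : E)
    (r : ι → ℝ) : volume (b.coordBox c r) = ∏ i, ENNReal.ofReal (2 * r i) := by
  have hbox : b.coordBox c r = (· + -c) ⁻¹' (b.repr ⁻¹'
      (WithLp.ofLp ⁻¹' Set.univ.pi fun i => Set.Icc (-r i) (r i))) := by
    ext x
    simp only [coordBox, Set.mem_preimage, Set.mem_univ_pi, Set.mem_Icc, Set.mem_ofPred_eq,
      abs_le, ← sub_eq_add_neg]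
  have hpi : MeasurableSet (Set.univ.pi fun i => Set.Icc (-r i) (r i)) :=
    MeasurableSet.univ_pi fun _ => measurableSet_Icc
  rw [hbox, measure_preimage_add_right, b.measurePreserving_repr.measure_preimage
    (hpi.preimage (PiLp.volume_preserving_ofLp ι).measurable).nullMeasurableSet,
    (PiLp.volume_preserving_ofLp ι).measure_preimage hpi.nullMeasurableSet, volume_pi_pi]
  simp_rw [Real.volume_Icc, sub_neg_eq_add, two_mul]

end OrthonormalBasis

section Needle

variable {ι E : Type*} [DecidableEq ι]

def needleRadii (k : ι) (δ : ℝ) : ι → ℝ := Function.update (fun _ => δ ^ 2) k δ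

theorem needleRadii_nonneg {δ : ℝ} (hδ0 : 0 ≤ δ) (k i : ι) : 0 ≤ needleRadii k δ i := by
  rcases eq_or_ne i k with rfl | hik
  · simpa [needleRadii] using hδ0
  · simpa [needleRadii, hik] using sq_nonneg δ

theorem needleRadii_le {δ : ℝ} (hδ0 : 0 ≤ δ) (hδ1 : δ ≤ 1) (k i : ι) : needleRadii k δ i ≤ δ := by
  rcases eq_or_ne i k with rfl | hik
  · simp [needleRadii]
  · simpa [needleRadii, hik] using pow_le_of_le_one hδ0 hδ1 two_ne_zero

variable [Fintype ι]

theorem prod_two_mul_needleRadii (k : ι) (δ : ℝ) :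
    ∏ i, 2 * needleRadii k δ i = 2 ^ Fintype.card ι * δ ^ (2 * Fintype.card ι - 1) := by
  have hcard : 1 ≤ Fintype.card ι := Fintype.card_pos_iff.mpr ⟨k⟩
  rw [prod_mul_distrib, prod_const, card_univ, needleRadii, prod_update_of_mem (mem_univ k),
    prod_const, card_univ_sdiff, card_singleton, ← pow_mul, ← pow_succ']
  congr 2
  omega

variable [NormedAddCommGroup E] [InnerProductSpace ℝ E] (b : OrthonormalBasis ι ℝ E) (k : ι)
  {q x₁ x₂ : E} {δ : ℝ}

theorem coordBox_needleRadii_subset_closedBall (hδ0 : 0 ≤ δ) (hδ1 : δ ≤ 1) {c : E}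
    (hc : ‖c - q‖ ≤ 3 * δ) :
    b.coordBox c (needleRadii k δ) ⊆ closedBall q (4 * Fintype.card ι * δ) := by
  intro x hx
  have hcard : (1 : ℝ) ≤ Fintype.card ι := mod_cast Fintype.card_pos_iff.mpr ⟨k⟩
  have hsum : ∑ i, needleRadii k δ i ≤ Fintype.card ι * δ := by
    simpa using sum_le_sum fun i (_ : i ∈ univ) => needleRadii_le hδ0 hδ1 k i
  rw [mem_closedBall_iff_norm]
  calc ‖x - q‖ ≤ ‖x - c‖ + ‖c - q‖ := norm_sub_le_norm_sub_add_norm_sub _ _ _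
    _ ≤ Fintype.card ι * δ + 3 * δ :=
        add_le_add ((b.norm_sub_le_sum_of_mem_coordBox hx).trans hsum) hc
    _ ≤ 4 * Fintype.card ι * δ := by nlinarith

theorem le_repr_sub_and_norm_sub_le_of_mem_needleBoxes (hδ0 : 0 ≤ δ)
    (hx₁ : x₁ ∈ b.coordBox (q - (3 * δ) • b k) (needleRadii k δ))
    (hx₂ : x₂ ∈ b.coordBox (q + (3 * δ) • b k) (needleRadii k δ)) :
    4 * δ ≤ b.repr (x₂ - x₁) k ∧
      ‖x₂ - x₁‖ ≤ b.repr (x₂ - x₁) k + 2 * Fintype.card ι * δ ^ 2 := by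
  have hv := b.sub_mem_coordBox hx₂ hx₁
  rw [show q + (3 * δ) • b k - (q - (3 * δ) • b k) = (6 * δ) • b k by module] at hv
  have hcoord : ∀ i, b.repr (x₂ - x₁ - (6 * δ) • b k) i
      = b.repr (x₂ - x₁) i - if i = k then 6 * δ else 0 := by
    intro i
    simp [b.repr_self, PiLp.single_apply]
  have hk : 4 * δ ≤ b.repr (x₂ - x₁) k := by
    have h := hv k
    simp only [hcoord, if_pos, Pi.add_apply, needleRadii, Function.update_self] at h
    linarith [(abs_le.mp h).1]
  have htrans : ∀ i ∈ univ.erase k, |b.repr (x₂ - x₁) i| ≤ 2 * δ ^ 2 := by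
    intro i hi
    simpa [hcoord, ne_of_mem_erase hi, needleRadii, two_mul] using hv i
  have hperp : ‖x₂ - x₁ - b.repr (x₂ - x₁) k • b k‖ ≤ 2 * Fintype.card ι * δ ^ 2 :=
    calc _ ≤ ∑ i ∈ univ.erase k, |b.repr (x₂ - x₁) i| := b.norm_sub_repr_smul_le_sum_erase k _
      _ ≤ ∑ i ∈ univ.erase k, 2 * δ ^ 2 := sum_le_sum htrans
      _ ≤ ∑ i : ι, 2 * δ ^ 2 :=
          sum_le_sum_of_subset_of_nonneg (erase_subset k univ) (by intros; positivity)
      _ = 2 * Fintype.card ι * δ ^ 2 := by simp; ring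
  refine ⟨hk, ?_⟩
  calc ‖x₂ - x₁‖ ≤ ‖b.repr (x₂ - x₁) k • b k‖ + ‖x₂ - x₁ - b.repr (x₂ - x₁) k • b k‖ :=
        norm_le_insert' _ _
    _ ≤ b.repr (x₂ - x₁) k + 2 * Fintype.card ι * δ ^ 2 := by
        rw [norm_smul, b.orthonormal.1 k, mul_one, Real.norm_of_nonneg (by linarith)]
        linarith

theorem le_abs_sub_div_norm_sub_of_mem_needleBoxes {f : E → ℝ} {f' : E → E →L[ℝ] ℝ} {L K : ℝ}
    (hf : ∀ x ∈ closedBall q (4 * Fintype.card ι * δ), HasFDerivAt f (f' x) x)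
    (hK : ∀ x ∈ closedBall q (4 * Fintype.card ι * δ),
      ‖f' x - innerSL ℝ (L • b k)‖ ≤ K * ‖x - q‖)
    (hK0 : 0 ≤ K) (hL : 0 ≤ L) (hδ0 : 0 < δ) (hδ1 : δ ≤ 1)
    (hx₁ : x₁ ∈ b.coordBox (q - (3 * δ) • b k) (needleRadii k δ))
    (hx₂ : x₂ ∈ b.coordBox (q + (3 * δ) • b k) (needleRadii k δ)) :
    L - (L * Fintype.card ι / 2 + 4 * Fintype.card ι * K) * δ ≤ |f x₂ - f x₁| / ‖x₂ - x₁‖ := by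
  obtain ⟨hs, hN⟩ := le_repr_sub_and_norm_sub_le_of_mem_needleBoxes b k hδ0.le hx₁ hx₂
  have hη : ∀ x ∈ closedBall q (4 * Fintype.card ι * δ),
      ‖f' x - innerSL ℝ (L • b k)‖ ≤ K * (4 * Fintype.card ι * δ) := fun x hx =>
    (hK x hx).trans (by gcongr; exact mem_closedBall_iff_norm.mp hx)
  have hmvt := (convex_closedBall q _).inner_sub_sub_mul_norm_sub_le_sub hf hη
    (coordBox_needleRadii_subset_closedBall b k hδ0.le hδ1
      (by simp [norm_smul, abs_of_pos hδ0]) hx₁)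
    (coordBox_needleRadii_subset_closedBall b k hδ0.le hδ1
      (by simp [norm_smul, abs_of_pos hδ0]) hx₂)
  rw [real_inner_smul_left, ← b.repr_apply_apply] at hmvt
  have hsN : b.repr (x₂ - x₁) k ≤ ‖x₂ - x₁‖ := by
    have h := real_inner_le_norm (b k) (x₂ - x₁)
    rwa [b.orthonormal.1 k, one_mul, ← b.repr_apply_apply] at h
  have hNpos : 0 < ‖x₂ - x₁‖ := by linarith
  -- the `δ²` transverse error is small relative to the length `‖x₂ - x₁‖ ≥ 4δ`
  have hcurv : ‖x₂ - x₁‖ - b.repr (x₂ - x₁) k ≤ Fintype.card ι * δ / 2 * ‖x₂ - x₁‖ := by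
    have h := mul_le_mul_of_nonneg_left (hs.trans hsN)
      (by positivity : (0 : ℝ) ≤ Fintype.card ι * δ)
    linarith
  rw [le_div_iff₀ hNpos]
  nlinarith [le_abs_self (f x₂ - f x₁), mul_le_mul_of_nonneg_left hcurv hL]

theorem cond_coordBox_needleRadii [MeasurableSpace E] [BorelSpace E] [FiniteDimensional ℝ E]
    {X : Set E} (hX : MeasurableSet X) (hX0 : volume X ≠ 0) (hXtop : volume X ≠ ∞) {c : E}
    (hδ0 : 0 ≤ δ) (hsub : b.coordBox c (needleRadii k δ) ⊆ X) :
    volume[|X] (b.coordBox c (needleRadii k δ)) =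
      ENNReal.ofReal (2 ^ Fintype.card ι / (volume X).toReal * δ ^ (2 * Fintype.card ι - 1)) := by
  have hXpos : 0 < (volume X).toReal := ENNReal.toReal_pos hX0 hXtop
  rw [cond_apply hX, Set.inter_eq_right.mpr hsub, b.volume_coordBox,
    ← ENNReal.ofReal_prod_of_nonneg fun i _ => mul_nonneg zero_le_two (needleRadii_nonneg hδ0 k i),
    prod_two_mul_needleRadii, ← ENNReal.ofReal_toReal hXtop, ← ENNReal.ofReal_inv_of_pos hXpos,
    ← ENNReal.ofReal_mul (inv_nonneg.mpr hXpos.le), ENNReal.toReal_ofReal hXpos.le]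
  ring_nf

theorem ofReal_le_measure_pi_exists_ne_mem_needleBoxes [MeasurableSpace E] [BorelSpace E]
    [FiniteDimensional ℝ E] {X : Set E} (hX : MeasurableSet X) (hX0 : volume X ≠ 0)
    (hXtop : volume X ≠ ∞) (hδ0 : 0 < δ) (hδ1 : δ ≤ 1)
    (hqX : closedBall q (4 * Fintype.card ι * δ) ⊆ X) (n : ℕ) :
    ENNReal.ofReal (1 - 2 * Real.exp
        (-(n * (2 ^ Fintype.card ι / (volume X).toReal * δ ^ (2 * Fintype.card ι - 1))))) ≤
      Measure.pi (fun _ : Fin n => volume[|X]) {y | ∃ i j, i ≠ j ∧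
        y i ∈ b.coordBox (q + (3 * δ) • b k) (needleRadii k δ) ∧
        y j ∈ b.coordBox (q - (3 * δ) • b k) (needleRadii k δ)} := by
  have := cond_isProbabilityMeasure_of_finite hX0 hXtop
  have hvol : ∀ c, ‖c - q‖ ≤ 3 * δ → volume[|X] (b.coordBox c (needleRadii k δ)) =
      ENNReal.ofReal (2 ^ Fintype.card ι / (volume X).toReal * δ ^ (2 * Fintype.card ι - 1)) :=
    fun c hc => cond_coordBox_needleRadii b k hX hX0 hXtop hδ0.le
      ((coordBox_needleRadii_subset_closedBall b k hδ0.le hδ1 hc).trans hqX)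
  refine (ofReal_one_sub_le_measure_pi_exists_mem_and_exists_mem _
    (b.isClosed_coordBox _ _).measurableSet (b.isClosed_coordBox _ _).measurableSet
    (by positivity) (hvol (q + (3 * δ) • b k) (by simp [norm_smul, abs_of_pos hδ0])).ge
    (hvol (q - (3 * δ) • b k) (by simp [norm_smul, abs_of_pos hδ0])).ge n).trans (measure_mono ?_)
  rintro y ⟨⟨i, hi⟩, j, hj⟩
  refine ⟨i, j, ?_, hi, hj⟩
  rintro rfl
  have h := (le_repr_sub_and_norm_sub_le_of_mem_needleBoxes b k hδ0.le hj hi).1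
  simp only [sub_self, map_zero, PiLp.zero_apply] at h
  linarith

theorem ofReal_le_measure_pi_exists_ne_le_abs_sub_div_norm_sub [MeasurableSpace E] [BorelSpace E]
    [FiniteDimensional ℝ E] {X : Set E} (hX : MeasurableSet X) (hX0 : volume X ≠ 0)
    (hXtop : volume X ≠ ∞) {f : E → ℝ} {f' : E → E →L[ℝ] ℝ} {L K : ℝ}
    (hf : ∀ x ∈ closedBall q (4 * Fintype.card ι * δ), HasFDerivAt f (f' x) x)
    (hK : ∀ x ∈ closedBall q (4 * Fintype.card ι * δ),
      ‖f' x - innerSL ℝ (L • b k)‖ ≤ K * ‖x - q‖)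
    (hK0 : 0 ≤ K) (hL : 0 ≤ L) (hδ0 : 0 < δ) (hδ1 : δ ≤ 1)
    (hqX : closedBall q (4 * Fintype.card ι * δ) ⊆ X) (n : ℕ) :
    ENNReal.ofReal (1 - 2 * Real.exp
        (-(n * (2 ^ Fintype.card ι / (volume X).toReal * δ ^ (2 * Fintype.card ι - 1))))) ≤
      Measure.pi (fun _ : Fin n => volume[|X]) {y | ∃ i j, i ≠ j ∧
        L - (L * Fintype.card ι / 2 + 4 * Fintype.card ι * K) * δ ≤
          |f (y i) - f (y j)| / ‖y i - y j‖} :=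
  (ofReal_le_measure_pi_exists_ne_mem_needleBoxes b k hX hX0 hXtop hδ0 hδ1 hqX n).trans <|
    measure_mono fun _ ⟨i, j, hij, hi, hj⟩ =>
      ⟨i, j, hij, le_abs_sub_div_norm_sub_of_mem_needleBoxes b k hf hK hK0 hL hδ0 hδ1 hj hi⟩

end Needle

theorem lipschitz_estimation_sample_complexity_general
    {d : ℕ} (hd : 1 ≤ d) (X : Set (EuclideanSpace ℝ (Fin d)))
    (hXcompact : IsCompact X)
    (φ : EuclideanSpace ℝ (Fin d) → ℝ) (hφ : ContDiff ℝ 2 φ)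
    (Lstar : ℝ) (hLpos : 0 < Lstar)
    (qstar : EuclideanSpace ℝ (Fin d)) (hqstar_mem : qstar ∈ interior X)
    (hqstar : ‖gradient φ qstar‖ = Lstar) :
    ∃ C₀ > (0 : ℝ), ∃ κ > (0 : ℝ), ∃ δ₀ > (0 : ℝ),
      ∀ δ ∈ Set.Ioo (0 : ℝ) δ₀, ∀ n : ℕ,
        (Measure.pi fun _ : Fin n =>
            ((volume X)⁻¹ • volume.restrict X :
              Measure (EuclideanSpace ℝ (Fin d))))
          {q : Fin n → EuclideanSpace ℝ (Fin d) | ∃ i j : Fin n, i ≠ j ∧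
            (1 - δ) * Lstar - C₀ * δ ≤ |φ (q i) - φ (q j)| / ‖q i - q j‖} ≥
        ENNReal.ofReal (1 - 3 * Real.exp (-(n : ℝ) * κ * δ ^ (2 * d - 1))) := by
  set k : Fin d := ⟨0, hd⟩
  obtain ⟨b, hb⟩ := exists_orthonormalBasis_norm_smul_apply_eq (E := EuclideanSpace ℝ (Fin d))
    (by simp) k (v := gradient φ qstar) (norm_pos_iff.mp (hqstar ▸ hLpos))
  have hgrad : innerSL ℝ (Lstar • b k) = fderiv ℝ φ qstar := by
    rw [← hqstar, hb, ← toDual_gradient]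
    rfl
  obtain ⟨K, hK⟩ := hφ.contDiffAt.exists_eventually_norm_fderiv_sub_le
  obtain ⟨ε, hε, hεK⟩ :=
    eventually_nhds_iff_ball.mp (hK.and (mem_interior_iff_mem_nhds.mp hqstar_mem))
  have hX0 : volume X ≠ 0 := (Measure.measure_pos_of_nonempty_interior volume ⟨qstar, hqstar_mem⟩).ne'
  have hd' : (1 : ℝ) ≤ d := mod_cast hd
  refine ⟨Lstar * d / 2 + 4 * d * K + 1, by positivity, 2 ^ d / (volume X).toReal,
    div_pos (by positivity) (ENNReal.toReal_pos hX0 hXcompact.measure_ne_top),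
    min 1 (ε / (4 * d)), by positivity, ?_⟩
  rintro δ ⟨hδ0, hδ⟩ n
  have hR : closedBall qstar (4 * Fintype.card (Fin d) * δ) ⊆ ball qstar ε := by
    have h := hδ.trans_le (min_le_right _ _)
    rw [lt_div_iff₀ (by positivity)] at h
    exact closedBall_subset_ball (by simpa [mul_comm] using h)
  have hprob := ofReal_le_measure_pi_exists_ne_le_abs_sub_div_norm_sub b k
    hXcompact.isClosed.measurableSet hX0 hXcompact.measure_ne_top
    (fun x _ => (hφ.differentiable (by norm_num) x).hasFDerivAt)
    (fun x hx => hgrad ▸ (hεK x (hR hx)).1) K.coe_nonneg hLpos.le hδ0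
    (hδ.le.trans (min_le_left _ _)) (fun x hx => (hεK x (hR hx)).2) n
  simp only [Fintype.card_fin] at hprob
  -- `volume[|X]` is by definition the normalized restriction `(volume X)⁻¹ • volume.restrict X`
  refine le_trans ?_ (hprob.trans (measure_mono fun y ⟨i, j, hij, h⟩ =>
    ⟨i, j, hij, le_trans (by linarith [mul_pos hδ0 hLpos]) h⟩))
  gcongr
  · norm_num
  · linarith

/-- **Theorem 1.** Let `X ⊂ ℝ^d` (`d ≥ 1`) be compact with nonempty interior and
let `φ` be `C²`, globally Lipschitz with constant `L* > 0` (so `‖∇φ‖ ≤ L*`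
everywhere), with the Lipschitz constant attained at an interior point `q*` of
`X`. Then there are constants `C₀, κ, δ₀ > 0` such that for all `δ ∈ (0, δ₀)`
and all `n`, if `q₁, …, qₙ` are i.i.d. uniform samples from `X`, then with
probability at least `1 − 3 exp(−n κ δ^(2d−1))` some pair `qᵢ ≠ qⱼ` has
difference quotient at least `(1 − δ)L* − C₀ δ`. -/
theorem lipschitz_estimation_sample_complexity
    {d : ℕ} (hd : 1 ≤ d) (X : Set (EuclideanSpace ℝ (Fin d)))
    (hXcompact : IsCompact X) (hXint : (interior X).Nonempty)
    (φ : EuclideanSpace ℝ (Fin d) → ℝ) (hφ : ContDiff ℝ 2 φ)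
    (Lstar : ℝ) (hLpos : 0 < Lstar)
    (hgrad : ∀ q, ‖gradient φ q‖ ≤ Lstar)
    (qstar : EuclideanSpace ℝ (Fin d)) (hqstar_mem : qstar ∈ interior X)
    (hqstar : ‖gradient φ qstar‖ = Lstar) :
    ∃ C₀ > (0 : ℝ), ∃ κ > (0 : ℝ), ∃ δ₀ > (0 : ℝ),
      ∀ δ ∈ Set.Ioo (0 : ℝ) δ₀, ∀ n : ℕ,
        (Measure.pi fun _ : Fin n =>
            ((volume X)⁻¹ • volume.restrict X :
              Measure (EuclideanSpace ℝ (Fin d))))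
          {q : Fin n → EuclideanSpace ℝ (Fin d) | ∃ i j : Fin n, i ≠ j ∧
            (1 - δ) * Lstar - C₀ * δ ≤ |φ (q i) - φ (q j)| / ‖q i - q j‖} ≥
        ENNReal.ofReal (1 - 3 * Real.exp (-(n : ℝ) * κ * δ ^ (2 * d - 1))) :=
  lipschitz_estimation_sample_complexity_general hd X hXcompact φ hφ Lstar hLpos qstar hqstar_mem
    hqstar
end

section
/- Suppose Ψ + Γᵀ M(L) Γ ⪯ 0. Then for every x ∈ ℝ^{n_x}, the closed-loop successor state x⁺ = (A + B K₀) x + G φ(C_q x) satisfies (x⁺)ᵀ P x⁺ ≤ α² xᵀ P x. (One-step Lyapunov decrease established in the proof of Theorem 2.) -/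
open Matrix

/-- The Euclidean norm of a vector in `ℝ^k`. -/
noncomputable def eNorm {k : ℕ} (x : Fin k → ℝ) : ℝ := Real.sqrt (x ⬝ᵥ x)

/-! Evaluating the LMI on the stacked vector `(x, φ(C_q x))` turns `Ψ` into
`V(x⁺) - α² V(x)` with `V(x) = xᵀ P x`, and `Γᵀ M(L) Γ` into `ν⁻¹ (L² ‖C_q x‖² - ‖φ(C_q x)‖²)`,
which is nonnegative by the Lipschitz bound at `0` (a sector condition). Nonnegativity of
the negated sum then forces `V(x⁺) - α² V(x) ≤ 0`. -/

lemma dotProduct_self_le_of_eNorm_le {m n : ℕ} {x : Fin m → ℝ} {y : Fin n → ℝ} {L : ℝ}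
    (h : eNorm y ≤ L * eNorm x) : y ⬝ᵥ y ≤ L ^ 2 * (x ⬝ᵥ x) := by
  have hsq : eNorm y ^ 2 ≤ (L * eNorm x) ^ 2 := pow_le_pow_left₀ (Real.sqrt_nonneg _) h 2
  have hself {k : ℕ} (v : Fin k → ℝ) : 0 ≤ v ⬝ᵥ v := by
    simpa using dotProduct_self_star_nonneg v
  rwa [mul_pow, eNorm, eNorm, Real.sq_sqrt (hself x), Real.sq_sqrt (hself y)] at hsq

namespace Matrix

variable {l m n o : Type*} [Fintype l] [Fintype m] [Fintype n] [Fintype o] {R : Type*}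

lemma dotProduct_transpose_mul_mul_mulVec [CommSemiring R] (M : Matrix m n R)
    (P : Matrix m m R) (N : Matrix m o R) (x : n → R) (y : o → R) :
    x ⬝ᵥ (Mᵀ * P * N) *ᵥ y = (M *ᵥ x) ⬝ᵥ P *ᵥ (N *ᵥ y) := by
  rw [Matrix.mul_assoc, ← mulVec_mulVec, dotProduct_transpose_mulVec, dotProduct_comm,
    ← mulVec_mulVec]

lemma sumElim_dotProduct_fromBlocks_mulVec_sumElim [CommSemiring R]
    (A : Matrix m m R) (B : Matrix m n R) (C : Matrix n m R) (D : Matrix n n R)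
    (x : m → R) (y : n → R) :
    Sum.elim x y ⬝ᵥ fromBlocks A B C D *ᵥ Sum.elim x y =
      x ⬝ᵥ A *ᵥ x + x ⬝ᵥ B *ᵥ y + (y ⬝ᵥ C *ᵥ x + y ⬝ᵥ D *ᵥ y) := by
  rw [fromBlocks_mulVec, sumElim_dotProduct_sumElim, dotProduct_add, dotProduct_add,
    Sum.elim_comp_inl, Sum.elim_comp_inr]

lemma sumElim_dotProduct_lyapunovBlock_mulVec_sumElim [CommRing R]
    (F : Matrix m m R) (G : Matrix m n R) (P : Matrix m m R) (c : R) (x : m → R) (w : n → R) :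
    Sum.elim x w ⬝ᵥ
        fromBlocks (Fᵀ * P * F - c • P) (Fᵀ * P * G) (Gᵀ * P * F) (Gᵀ * P * G) *ᵥ Sum.elim x w =
      (F *ᵥ x + G *ᵥ w) ⬝ᵥ P *ᵥ (F *ᵥ x + G *ᵥ w) - c * (x ⬝ᵥ P *ᵥ x) := by
  simp only [sumElim_dotProduct_fromBlocks_mulVec_sumElim, sub_mulVec, dotProduct_sub,
    dotProduct_transpose_mul_mul_mulVec, smul_mulVec, dotProduct_smul, smul_eq_mul, mulVec_add,
    dotProduct_add, add_dotProduct]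
  ring

lemma sumElim_dotProduct_sectorMultiplier_mulVec_sumElim [CommRing R] [DecidableEq l]
    [DecidableEq n] (C : Matrix l m R) (a b : R) (x : m → R) (w : n → R) :
    Sum.elim x w ⬝ᵥ ((fromBlocks C 0 0 (1 : Matrix n n R))ᵀ *
        fromBlocks (a • (1 : Matrix l l R)) 0 0 (b • (1 : Matrix n n R)) *
        fromBlocks C 0 0 (1 : Matrix n n R)) *ᵥ Sum.elim x w =
      a * (C *ᵥ x ⬝ᵥ C *ᵥ x) + b * (w ⬝ᵥ w) := by
  rw [dotProduct_transpose_mul_mul_mulVec, fromBlocks_mulVec]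
  simp only [zero_mulVec, one_mulVec, add_zero, zero_add, Sum.elim_comp_inl, Sum.elim_comp_inr,
    sumElim_dotProduct_fromBlocks_mulVec_sumElim, smul_mulVec, dotProduct_smul, smul_eq_mul,
    dotProduct_zero]

end Matrix

theorem one_step_lyapunov_decrease_general
    {nx nu nφ nq : ℕ}
    (A : Matrix (Fin nx) (Fin nx) ℝ) (B : Matrix (Fin nx) (Fin nu) ℝ)
    (G : Matrix (Fin nx) (Fin nφ) ℝ) (Cq : Matrix (Fin nq) (Fin nx) ℝ)
    (K₀ : Matrix (Fin nu) (Fin nx) ℝ)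
    (φ : (Fin nq → ℝ) → (Fin nφ → ℝ)) (hφ0 : φ 0 = 0)
    (L : ℝ)
    (hφLip : ∀ q₁ q₂, eNorm (φ q₁ - φ q₂) ≤ L * eNorm (q₁ - q₂))
    (P : Matrix (Fin nx) (Fin nx) ℝ)
    (α : ℝ) (ν : ℝ) (hν : 0 < ν)
    (hLMI :
      (-(Matrix.fromBlocks
          ((A + B * K₀)ᵀ * P * (A + B * K₀) - α ^ 2 • P)
          ((A + B * K₀)ᵀ * P * G)
          (Gᵀ * P * (A + B * K₀))
          (Gᵀ * P * G) +
        (Matrix.fromBlocks Cq 0 0 (1 : Matrix (Fin nφ) (Fin nφ) ℝ))ᵀ *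
          Matrix.fromBlocks ((ν⁻¹ * L ^ 2) • (1 : Matrix (Fin nq) (Fin nq) ℝ)) 0 0
            ((-ν⁻¹) • (1 : Matrix (Fin nφ) (Fin nφ) ℝ)) *
          Matrix.fromBlocks Cq 0 0 (1 : Matrix (Fin nφ) (Fin nφ) ℝ))).PosSemidef) :
    ∀ x : Fin nx → ℝ,
      ((A + B * K₀).mulVec x + G.mulVec (φ (Cq.mulVec x))) ⬝ᵥ
          P.mulVec ((A + B * K₀).mulVec x + G.mulVec (φ (Cq.mulVec x))) ≤
        α ^ 2 * (x ⬝ᵥ P.mulVec x) := by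
  intro x
  have hsector : φ (Cq *ᵥ x) ⬝ᵥ φ (Cq *ᵥ x) ≤ L ^ 2 * (Cq *ᵥ x ⬝ᵥ Cq *ᵥ x) :=
    dotProduct_self_le_of_eNorm_le (by simpa [hφ0] using hφLip (Cq *ᵥ x) 0)
  have hLMI_x := hLMI.dotProduct_mulVec_nonneg (Sum.elim x (φ (Cq *ᵥ x)))
  rw [star_trivial, neg_mulVec, dotProduct_neg, add_mulVec, dotProduct_add,
    sumElim_dotProduct_lyapunovBlock_mulVec_sumElim,
    sumElim_dotProduct_sectorMultiplier_mulVec_sumElim] at hLMI_x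
  linarith [mul_le_mul_of_nonneg_left hsector (inv_nonneg.mpr hν.le)]

/-- One-step Lyapunov decrease established in the proof of Theorem 2: if
`Ψ + Γᵀ M(L) Γ ⪯ 0` then for every state `x` the closed-loop successor state
`x⁺ = (A + BK₀)x + Gφ(C_q x)` satisfies `(x⁺)ᵀ P x⁺ ≤ α² xᵀ P x`. -/
theorem one_step_lyapunov_decrease
    {nx nu nφ nq : ℕ}
    (A : Matrix (Fin nx) (Fin nx) ℝ) (B : Matrix (Fin nx) (Fin nu) ℝ)
    (G : Matrix (Fin nx) (Fin nφ) ℝ) (Cq : Matrix (Fin nq) (Fin nx) ℝ)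
    (K₀ : Matrix (Fin nu) (Fin nx) ℝ)
    (φ : (Fin nq → ℝ) → (Fin nφ → ℝ)) (hφ0 : φ 0 = 0)
    (L : ℝ) (hL : 0 < L)
    (hφLip : ∀ q₁ q₂, eNorm (φ q₁ - φ q₂) ≤ L * eNorm (q₁ - q₂))
    (P : Matrix (Fin nx) (Fin nx) ℝ) (hP : P.PosDef)
    (α : ℝ) (hα : α ∈ Set.Ioo (0 : ℝ) 1) (ν : ℝ) (hν : 0 < ν)
    (hLMI :
      (-(Matrix.fromBlocks
          ((A + B * K₀)ᵀ * P * (A + B * K₀) - α ^ 2 • P)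
          ((A + B * K₀)ᵀ * P * G)
          (Gᵀ * P * (A + B * K₀))
          (Gᵀ * P * G) +
        (Matrix.fromBlocks Cq 0 0 (1 : Matrix (Fin nφ) (Fin nφ) ℝ))ᵀ *
          Matrix.fromBlocks ((ν⁻¹ * L ^ 2) • (1 : Matrix (Fin nq) (Fin nq) ℝ)) 0 0
            ((-ν⁻¹) • (1 : Matrix (Fin nφ) (Fin nφ) ℝ)) *
          Matrix.fromBlocks Cq 0 0 (1 : Matrix (Fin nφ) (Fin nφ) ℝ))).PosSemidef) :
    ∀ x : Fin nx → ℝ,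
      ((A + B * K₀).mulVec x + G.mulVec (φ (Cq.mulVec x))) ⬝ᵥ
          P.mulVec ((A + B * K₀).mulVec x + G.mulVec (φ (Cq.mulVec x))) ≤
        α ^ 2 * (x ⬝ᵥ P.mulVec x) :=
  one_step_lyapunov_decrease_general A B G Cq K₀ φ hφ0 L hφLip P α ν hν hLMI
end

section
/- Fix α ∈ (0,1) and L̂ > 0. Suppose there exist a symmetric positive definite matrix S ∈ ℝ^{n_x×n_x}, a matrix Y ∈ ℝ^{n_u×n_x}, and a scalar ν > 0 such that the symmetric 4×4 block matrix with block rows [−α²S, 0, (AS + BY)ᵀ, L̂ (C_q S)ᵀ], [0, −νI_{n_φ}, ν Gᵀ, 0], [AS + BY, νG, −S, 0], [L̂ C_q S, 0, 0, −ν I_{n_q}] is negative semidefinite. Then the matrices K₀ = Y S⁻¹ and P = S⁻¹ and the scalar ν satisfy Ψ + Γᵀ M(L̂) Γ ⪯ 0 with the same α and L̂. (Theorem 3.) -/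
/-! The lower-right block `diag(S, νI)` of the LMI is positive definite, so by the Schur complement
the LMI gives `diag(α²S, νI) - Eᵀ diag(S, νI)⁻¹ E ⪰ 0` with `E = [[AS + BY, νG], [L̂ C_q S, 0]]`.
Congruence with `diag(S⁻¹, ν⁻¹I)` turns `E` into `[[A + BK₀, G], [L̂ C_q, 0]]` and this Schur
complement into `-(Ψ + Γᵀ M(L̂) Γ)`. -/

open Matrix

namespace Matrix

section
variable {R : Type*} [CommRing R] [PartialOrder R] [StarRing R] [StarOrderedRing R]
  {m n : Type*} [Fintype m] [Fintype n]

theorem PosDef.fromBlocks_zero_zero {A : Matrix m m R} {D : Matrix n n R} (hA : A.PosDef)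
    (hD : D.PosDef) : (fromBlocks A 0 0 D).PosDef := by
  refine posDef_iff_dotProduct_mulVec.mpr
    ⟨hA.isHermitian.fromBlocks (by simp) hD.isHermitian, fun x hx => ?_⟩
  obtain ⟨u, v, rfl⟩ : ∃ u v, x = Sum.elim u v := ⟨_, _, (Sum.elim_comp_inl_inr x).symm⟩
  have hstar : star (Sum.elim u v) = Sum.elim (star u) (star v) := by ext i; cases i <;> rfl
  simp only [hstar, fromBlocks_mulVec, Sum.elim_comp_inl, Sum.elim_comp_inr, zero_mulVec,
    add_zero, zero_add, sumElim_dotProduct_sumElim]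
  by_cases hu : u = 0
  · subst hu
    have hv : v ≠ 0 := by rintro rfl; exact hx Sum.elim_zero_zero
    simpa using hD.dotProduct_mulVec_pos hv
  · exact add_pos_of_pos_of_nonneg (hA.dotProduct_mulVec_pos hu)
      (hD.posSemidef.dotProduct_mulVec_nonneg v)

end

section
variable {R : Type*} [CommRing R] {m n p : Type*} [Fintype m] [Fintype n] [Fintype p]
  [DecidableEq n] [DecidableEq p]

theorem fromBlocks_add_transpose_mul_mul_eq_sub
    (P K : Matrix m m R) (G : Matrix m n R) (C : Matrix p m R) (a c L : R) :
    fromBlocks (Kᵀ * P * K - a • P) (Kᵀ * P * G) (Gᵀ * P * K) (Gᵀ * P * G) +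
        (fromBlocks C 0 0 (1 : Matrix n n R))ᵀ *
          fromBlocks ((c * L ^ 2) • (1 : Matrix p p R)) 0 0 ((-c) • (1 : Matrix n n R)) *
          fromBlocks C 0 0 (1 : Matrix n n R) =
      (fromBlocks K G (L • C) 0 : Matrix (m ⊕ p) (m ⊕ n) R)ᵀ *
          fromBlocks P 0 0 (c • 1 : Matrix p p R) * fromBlocks K G (L • C) 0 -
        fromBlocks (a • P) 0 0 (c • 1 : Matrix n n R) := by
  simp only [sub_eq_add_neg, fromBlocks_neg, fromBlocks_transpose, fromBlocks_multiply,
    fromBlocks_add]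
  congr 1 <;> simp only [transpose_zero, transpose_one, transpose_smul, Matrix.mul_zero,
    Matrix.zero_mul, Matrix.mul_one, add_zero, zero_add, Matrix.smul_mul,
    Matrix.mul_smul, neg_zero] <;> module

end

section
variable {K : Type*} [Field K] {m n p u : Type*} [Fintype m] [Fintype n] [Fintype u]
  [DecidableEq m] [DecidableEq n]

theorem fromBlocks_mul_fromBlocks_inv_smul_one {S : Matrix m m K} (hS : IsUnit S) {ν : K}
    (hν : ν ≠ 0) (A : Matrix m m K) (B : Matrix m u K) (Y : Matrix u m K) (G : Matrix m n K)
    (C : Matrix p m K) (L : K) :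
    (fromBlocks (A * S + B * Y) (ν • G) (L • (C * S)) 0 : Matrix (m ⊕ p) (m ⊕ n) K) *
        fromBlocks S⁻¹ 0 0 (ν⁻¹ • 1 : Matrix n n K) =
      fromBlocks (A + B * (Y * S⁻¹)) G (L • C) 0 := by
  have hSS : S * S⁻¹ = 1 := mul_nonsing_inv S ((isUnit_iff_isUnit_det S).mp hS)
  simp only [fromBlocks_multiply, Matrix.mul_zero, add_zero, zero_add, smul_zero,
    Matrix.add_mul, Matrix.mul_assoc, hSS, Matrix.mul_one, Matrix.smul_mul, Matrix.mul_smul,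
    smul_smul, inv_mul_cancel₀ hν, one_smul]

theorem transpose_fromBlocks_inv_smul_one_mul_mul {S : Matrix m m K} (hS : IsUnit S)
    (hSt : Sᵀ = S) {ν : K} (hν : ν ≠ 0) (a : K) :
    (fromBlocks S⁻¹ 0 0 (ν⁻¹ • 1 : Matrix n n K))ᵀ * fromBlocks (a • S) 0 0 (ν • 1) *
        fromBlocks S⁻¹ 0 0 (ν⁻¹ • 1) =
      fromBlocks (a • S⁻¹) 0 0 (ν⁻¹ • 1 : Matrix n n K) := by
  have hSS : S⁻¹ * S = 1 := nonsing_inv_mul S ((isUnit_iff_isUnit_det S).mp hS)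
  simp only [fromBlocks_transpose, fromBlocks_multiply, transpose_nonsing_inv, hSt,
    transpose_zero, transpose_smul, transpose_one, Matrix.mul_zero, Matrix.zero_mul, add_zero,
    zero_add, Matrix.smul_mul, Matrix.mul_smul, hSS, Matrix.one_mul, Matrix.mul_one, smul_smul,
    smul_zero, mul_inv_cancel₀ hν, mul_one]

end

end Matrix

theorem LMI_implies_multiplier_condition_general
    {nx nu nφ nq : ℕ}
    (A : Matrix (Fin nx) (Fin nx) ℝ) (B : Matrix (Fin nx) (Fin nu) ℝ)
    (G : Matrix (Fin nx) (Fin nφ) ℝ) (Cq : Matrix (Fin nq) (Fin nx) ℝ)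
    (α : ℝ) (Lhat : ℝ)
    (S : Matrix (Fin nx) (Fin nx) ℝ) (hS : S.PosDef)
    (Y : Matrix (Fin nu) (Fin nx) ℝ) (ν : ℝ) (hν : 0 < ν)
    (hLMI :
      (-(Matrix.fromBlocks
          (Matrix.fromBlocks ((-(α ^ 2)) • S) 0 0
            ((-ν) • (1 : Matrix (Fin nφ) (Fin nφ) ℝ)))
          (Matrix.fromBlocks ((A * S + B * Y)ᵀ) (Lhat • (Cq * S)ᵀ)
            (ν • Gᵀ) 0)
          (Matrix.fromBlocks (A * S + B * Y) (ν • G)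
            (Lhat • (Cq * S)) 0)
          (Matrix.fromBlocks (-S) 0 0
            ((-ν) • (1 : Matrix (Fin nq) (Fin nq) ℝ))))).PosSemidef) :
    (-(Matrix.fromBlocks
        ((A + B * (Y * S⁻¹))ᵀ * S⁻¹ * (A + B * (Y * S⁻¹)) - α ^ 2 • S⁻¹)
        ((A + B * (Y * S⁻¹))ᵀ * S⁻¹ * G)
        (Gᵀ * S⁻¹ * (A + B * (Y * S⁻¹)))
        (Gᵀ * S⁻¹ * G) +
      (Matrix.fromBlocks Cq 0 0 (1 : Matrix (Fin nφ) (Fin nφ) ℝ))ᵀ *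
        Matrix.fromBlocks ((ν⁻¹ * Lhat ^ 2) • (1 : Matrix (Fin nq) (Fin nq) ℝ)) 0 0
          ((-ν⁻¹) • (1 : Matrix (Fin nφ) (Fin nφ) ℝ)) *
        Matrix.fromBlocks Cq 0 0 (1 : Matrix (Fin nφ) (Fin nφ) ℝ))).PosSemidef := by
  set E : Matrix (Fin nx ⊕ Fin nq) (Fin nx ⊕ Fin nφ) ℝ :=
    fromBlocks (A * S + B * Y) (ν • G) (Lhat • (Cq * S)) 0
  set F : Matrix (Fin nx ⊕ Fin nq) (Fin nx ⊕ Fin nq) ℝ := fromBlocks S 0 0 (ν • 1)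
  set Q : Matrix (Fin nx ⊕ Fin nφ) (Fin nx ⊕ Fin nφ) ℝ := fromBlocks S⁻¹ 0 0 (ν⁻¹ • 1)
  have hF : F.PosDef := hS.fromBlocks_zero_zero (PosDef.one.smul hν)
  have : Invertible F := hF.isUnit.invertible
  have hFinv : F⁻¹ = fromBlocks S⁻¹ 0 0 (ν⁻¹ • 1) := by
    refine inv_eq_right_inv ?_
    simp [F, fromBlocks_multiply, smul_smul, hν.ne',
      mul_nonsing_inv S ((isUnit_iff_isUnit_det S).mp hS.isUnit), ← fromBlocks_one]
  have hLMI' : (fromBlocks (fromBlocks (α ^ 2 • S) 0 0 (ν • 1)) (-Eᵀ) (-Eᵀ)ᴴ F).PosSemidef := by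
    convert hLMI using 1
    simp [E, F, fromBlocks_neg, fromBlocks_transpose, conjTranspose_eq_transpose_of_trivial]
  have hSchur : (fromBlocks (α ^ 2 • S) 0 0 (ν • 1) - Eᵀ * F⁻¹ * E).PosSemidef := by
    simpa using (PosDef.fromBlocks₂₂ _ _ hF).mp hLMI'
  rw [fromBlocks_add_transpose_mul_mul_eq_sub, neg_sub,
    ← fromBlocks_mul_fromBlocks_inv_smul_one hS.isUnit hν.ne' A B Y G Cq Lhat,
    ← transpose_fromBlocks_inv_smul_one_mul_mul hS.isUnit hS.isHermitian hν.ne', ← hFinv]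
  convert hSchur.conjTranspose_mul_mul_same Q using 1
  simp only [Q, E, conjTranspose_eq_transpose_of_trivial, Matrix.mul_sub, Matrix.sub_mul,
    transpose_mul, Matrix.mul_assoc]

/-- **Theorem 3.** Fix `α ∈ (0,1)` and `L̂ > 0`. If there exist `S ≻ 0`, `Y` and
`ν > 0` satisfying the 4×4 block LMI with block rows
`[−α²S, 0, (AS+BY)ᵀ, L̂(C_qS)ᵀ]`, `[0, −νI, νGᵀ, 0]`, `[AS+BY, νG, −S, 0]`,
`[L̂C_qS, 0, 0, −νI]`, then `K₀ = YS⁻¹`, `P = S⁻¹` and `ν` satisfy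
`Ψ + Γᵀ M(L̂) Γ ⪯ 0` with the same `α` and `L̂`. -/
theorem LMI_implies_multiplier_condition
    {nx nu nφ nq : ℕ}
    (A : Matrix (Fin nx) (Fin nx) ℝ) (B : Matrix (Fin nx) (Fin nu) ℝ)
    (G : Matrix (Fin nx) (Fin nφ) ℝ) (Cq : Matrix (Fin nq) (Fin nx) ℝ)
    (α : ℝ) (hα : α ∈ Set.Ioo (0 : ℝ) 1) (Lhat : ℝ) (hLhat : 0 < Lhat)
    (S : Matrix (Fin nx) (Fin nx) ℝ) (hS : S.PosDef)
    (Y : Matrix (Fin nu) (Fin nx) ℝ) (ν : ℝ) (hν : 0 < ν)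
    (hLMI :
      (-(Matrix.fromBlocks
          (Matrix.fromBlocks ((-(α ^ 2)) • S) 0 0
            ((-ν) • (1 : Matrix (Fin nφ) (Fin nφ) ℝ)))
          (Matrix.fromBlocks ((A * S + B * Y)ᵀ) (Lhat • (Cq * S)ᵀ)
            (ν • Gᵀ) 0)
          (Matrix.fromBlocks (A * S + B * Y) (ν • G)
            (Lhat • (Cq * S)) 0)
          (Matrix.fromBlocks (-S) 0 0
            ((-ν) • (1 : Matrix (Fin nq) (Fin nq) ℝ))))).PosSemidef) :
    (-(Matrix.fromBlocks
        ((A + B * (Y * S⁻¹))ᵀ * S⁻¹ * (A + B * (Y * S⁻¹)) - α ^ 2 • S⁻¹)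
        ((A + B * (Y * S⁻¹))ᵀ * S⁻¹ * G)
        (Gᵀ * S⁻¹ * (A + B * (Y * S⁻¹)))
        (Gᵀ * S⁻¹ * G) +
      (Matrix.fromBlocks Cq 0 0 (1 : Matrix (Fin nφ) (Fin nφ) ℝ))ᵀ *
        Matrix.fromBlocks ((ν⁻¹ * Lhat ^ 2) • (1 : Matrix (Fin nq) (Fin nq) ℝ)) 0 0
          ((-ν⁻¹) • (1 : Matrix (Fin nφ) (Fin nφ) ℝ)) *
        Matrix.fromBlocks Cq 0 0 (1 : Matrix (Fin nφ) (Fin nφ) ℝ))).PosSemidef :=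
  LMI_implies_multiplier_condition_general A B G Cq α Lhat S hS Y ν hν hLMI
end
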